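/- arXiv:2411.06748 — 3 statements merged into one kernel-verified Lean document; each statement's English description precedes it below -/
import Mathlib

section
/- Let β₁, β₂, β₃ be real constants. The inequality β₁(d⊗d : D)² + β₂ (D : D) + β₃ |D d|² ≥ 0 holds for every symmetric trace-free 2×2 real matrix D and every unit vector d ∈ ℝ² if and only if β₁ + 2β₂ + β₃ ≥ 0 and 2β₂ + β₃ ≥ 0. -/
open Finset

theorem leslie_dissipation_iff (β₁ β₂ β₃ : ℝ) :
    (∀ (D : Matrix (Fin 2) (Fin 2) ℝ) (d : Fin 2 → ℝ),
        D.IsSymm → Matrix.trace D = 0 → (∑ i, d i ^ 2) = 1 →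
        0 ≤ β₁ * (∑ i, ∑ j, d i * d j * D i j) ^ 2
            + β₂ * (∑ i, ∑ j, (D i j) ^ 2)
            + β₃ * (∑ i, (∑ j, D i j * d j) ^ 2))
      ↔ (0 ≤ β₁ + 2 * β₂ + β₃ ∧ 0 ≤ 2 * β₂ + β₃) := by
  constructor
  · intro h
    constructor
    · have := h !![1,0;0,-1] ![1,0]
        (by ext i j; fin_cases i <;> fin_cases j <;> simp)
        (by simp [Matrix.trace_fin_two])
        (by simp [Fin.sum_univ_two])
      simp [Fin.sum_univ_two, Matrix.trace_fin_two] at this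
      linarith
    · have := h !![0,1;1,0] ![1,0]
        (by ext i j; fin_cases i <;> fin_cases j <;> simp)
        (by simp [Matrix.trace_fin_two])
        (by simp [Fin.sum_univ_two])
      simp [Fin.sum_univ_two, Matrix.trace_fin_two] at this
      linarith
  · rintro ⟨h1, h2⟩ D d hsym htr hd
    have hsym' : D 1 0 = D 0 1 := by
      have := hsym.apply 0 1; rw [this]
    have htr' : D 1 1 = - D 0 0 := by
      rw [Matrix.trace_fin_two] at htr; linarith
    simp only [Fin.sum_univ_two] at hd ⊢
    rw [hsym', htr']
    set a := D 0 0
    set b := D 0 1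
    set c := d 0
    set s := d 1
    have hab : (0:ℝ) ≤ a^2 + b^2 := by positivity
    have huv : (c^2 - s^2)^2 + (2*c*s)^2 = 1 := by
      have h : (c^2 - s^2)^2 + (2*c*s)^2 = (c^2 + s^2)^2 := by ring
      rw [h, hd, one_pow]
    have hX : c * c * a + c * s * b + (s * c * b + s * s * -a)
        = a*(c^2 - s^2) + 2*b*c*s := by ring
    have hDd : (a*c + b*s)^2 + (b*c + -a*s)^2 = a^2 + b^2 := by
      have h : (a*c + b*s)^2 + (b*c + -a*s)^2 = (a^2+b^2)*(c^2+s^2) := by ring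
      rw [h, hd, mul_one]
    rw [hX, hDd]
    have key : (a*(c^2 - s^2) + 2*b*c*s)^2 ≤ a^2 + b^2 := by
      nlinarith [sq_nonneg (a*(2*c*s) - b*(c^2 - s^2)), huv]
    rcases le_or_gt 0 β₁ with hb | hb
    · nlinarith [mul_nonneg hb (sq_nonneg (a*(c^2 - s^2) + 2*b*c*s)),
        mul_nonneg h2 hab]
    · nlinarith [mul_nonneg (le_of_lt (neg_pos.mpr hb)) (sub_nonneg.mpr key),
        mul_nonneg h1 hab]
end

section
/- Let 0 < T ≤ ∞ and let y, h : [0,T] → [0,∞) be continuous functions satisfying y'(t) ≤ c₁ y(t)² + c₂ + h(t) (in the sense of a differential inequality), with ∫₀ᵀ y(t) dt ≤ c₃ and ∫₀ᵀ h(t) dt ≤ c₄, for nonnegative constants c₁,...,c₄. Then for every r ∈ (0,T) and every t ∈ [0, T - r], y(t + r) ≤ (c₃/r + c₂ r + c₄) e^{c₁ c₃}. Moreover, if T = ∞ then y(t) → 0 as t → ∞. -/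
/-!
Multiplying by the integrating factor `exp (-c₁ ∫ₛᵘ y)` turns `y' ≤ c₁ y² + c₂ + h` into the
statement that `y u * exp (-c₁ ∫ₛᵘ y) - ∫ₛᵘ (c₂ + h)` is antitone, so on a window `[a, b]`
every `s` gives `y b ≤ (y s + c₂ (b - a) + ∫ₐᵇ h) exp (c₁ ∫ₐᵇ y)`. Averaging over `s ∈ [a, b]`
replaces `y s` by `(∫ₐᵇ y) / (b - a)`. When `T = ∞`, the integrals of `y` and `h` over
`[t - r, t]` tend to `0`, so `limsup y ≤ c₂ r` for every `r > 0`.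
-/

open MeasureTheory Filter Set Real
open scoped ENNReal

theorem ContinuousOn.hasDerivAt_intervalIntegral {f : ℝ → ℝ} {a b u : ℝ}
    (hf : ContinuousOn f (Icc a b)) (hu : u ∈ Ioo a b) :
    HasDerivAt (fun v => ∫ x in a..v, f x) (f u) u :=
  intervalIntegral.integral_hasDerivAt_right
    ((hf.mono (Icc_subset_Icc_right hu.2.le)).intervalIntegrable_of_Icc hu.1.le)
    ((hf.mono Ioo_subset_Icc_self).stronglyMeasurableAtFilter isOpen_Ioo u hu)
    (hf.continuousAt (Icc_mem_nhds hu.1 hu.2))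

theorem ContinuousOn.continuousOn_intervalIntegral {f : ℝ → ℝ} {a b : ℝ} (hab : a ≤ b)
    (hf : ContinuousOn f (Icc a b)) :
    ContinuousOn (fun v => ∫ x in a..v, f x) (Icc a b) := by
  have hf' : IntegrableOn f (uIcc a b) := by
    rw [uIcc_of_le hab]; exact hf.integrableOn_Icc
  simpa only [uIcc_of_le hab] using intervalIntegral.continuousOn_primitive_interval hf'

theorem intervalIntegral_le_of_le_left_of_nonneg {f : ℝ → ℝ} {a s b : ℝ} (has : a ≤ s)
    (hsb : s ≤ b) (hf : ContinuousOn f (Icc a b)) (hf₀ : ∀ t ∈ Icc a b, 0 ≤ f t) :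
    ∫ t in s..b, f t ≤ ∫ t in a..b, f t :=
  intervalIntegral.integral_mono_interval has hsb le_rfl
    ((ae_restrict_iff' measurableSet_Ioc).2
      (ae_of_all _ fun t ht => hf₀ t (Ioc_subset_Icc_self ht)))
    (hf.intervalIntegrable_of_Icc (has.trans hsb))

theorem intervalIntegral_le_of_lintegral_ofReal_le {f : ℝ → ℝ} {a b c : ℝ} {s : Set ℝ}
    (hab : a ≤ b) (hs : Ioc a b ⊆ s) (hf : IntegrableOn f (Ioc a b))
    (hf₀ : ∀ t ∈ Ioc a b, 0 ≤ f t) (hc : 0 ≤ c)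
    (h : ∫⁻ t in s, ENNReal.ofReal (f t) ≤ ENNReal.ofReal c) :
    ∫ t in a..b, f t ≤ c := by
  rw [intervalIntegral.integral_of_le hab, ← ENNReal.ofReal_le_ofReal_iff hc,
    ofReal_integral_eq_lintegral_ofReal hf
      ((ae_restrict_iff' measurableSet_Ioc).2 (ae_of_all _ hf₀))]
  exact (lintegral_mono_set hs).trans h

theorem integrableOn_of_lintegral_ofReal_le {f : ℝ → ℝ} {c : ℝ} {s : Set ℝ}
    (hs : MeasurableSet s) (hf : ContinuousOn f s) (hf₀ : ∀ x ∈ s, 0 ≤ f x)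
    (h : ∫⁻ x in s, ENNReal.ofReal (f x) ≤ ENNReal.ofReal c) :
    IntegrableOn f s :=
  (lintegral_ofReal_ne_top_iff_integrable (hf.aestronglyMeasurable hs)
    ((ae_restrict_iff' hs).2 (ae_of_all _ hf₀))).1 (ne_top_of_le_ne_top ENNReal.ofReal_ne_top h)

theorem tendsto_intervalIntegral_sub_atTop {f : ℝ → ℝ} {a : ℝ} (hf : IntegrableOn f (Ioi a))
    (r : ℝ) : Tendsto (fun t => ∫ x in t - r..t, f x) atTop (nhds 0) := by
  have hint : ∀ t, a ≤ t → IntervalIntegrable f volume a t := fun t ht =>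
    (intervalIntegrable_iff_integrableOn_Ioc_of_le ht).2 (hf.mono_set Ioc_subset_Ioi_self)
  have hlim := (intervalIntegral_tendsto_integral_Ioi a hf tendsto_id).sub
    (intervalIntegral_tendsto_integral_Ioi a hf (tendsto_atTop_add_const_right _ (-r) tendsto_id))
  rw [sub_self] at hlim
  refine hlim.congr' ?_
  filter_upwards [eventually_ge_atTop (a + r), eventually_ge_atTop a] with t htr hta
  rw [id, ← sub_eq_add_neg]
  exact intervalIntegral.integral_interval_sub_left (hint t hta) (hint _ (by linarith))

theorem le_mul_exp_integral_of_deriv_le_mul_add {y y' g k : ℝ → ℝ} {a b : ℝ} (hab : a ≤ b)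
    (hy : ContinuousOn y (Icc a b)) (hy' : ∀ t ∈ Ioo a b, HasDerivAt y (y' t) t)
    (hg : ContinuousOn g (Icc a b)) (hg₀ : ∀ t ∈ Icc a b, 0 ≤ g t)
    (hk : ContinuousOn k (Icc a b)) (hk₀ : ∀ t ∈ Icc a b, 0 ≤ k t)
    (hle : ∀ t ∈ Ioo a b, y' t ≤ g t * y t + k t) :
    y b ≤ (y a + ∫ t in a..b, k t) * exp (∫ t in a..b, g t) := by
  set G := fun v => ∫ x in a..v, g x
  set K := fun v => ∫ x in a..v, k x
  have hG₀ : ∀ v ∈ Icc a b, 0 ≤ G v := fun v hv =>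
    intervalIntegral.integral_nonneg hv.1 fun x hx => hg₀ x ⟨hx.1, hx.2.trans hv.2⟩
  have hanti : AntitoneOn (fun v => y v * exp (-G v) - K v) (Icc a b) := by
    refine antitoneOn_of_hasDerivWithinAt_nonpos (convex_Icc a b)
      ((hy.mul ((hg.continuousOn_intervalIntegral hab).neg.rexp)).sub
        (hk.continuousOn_intervalIntegral hab))
      (f' := fun v => (y' v - g v * y v) * exp (-G v) - k v) ?_ ?_ <;>
      rw [interior_Icc] <;> intro v hv
    · have hE : HasDerivAt (fun v => exp (-G v)) (exp (-G v) * -g v) v :=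
        (hg.hasDerivAt_intervalIntegral hv).neg.exp
      exact (((hy' v hv).mul hE).sub (hk.hasDerivAt_intervalIntegral hv)
        |>.congr_deriv (by ring)).hasDerivWithinAt
    · have hexp : exp (-G v) ≤ 1 := exp_le_one_iff.2 (neg_nonpos.2 (hG₀ v (Ioo_subset_Icc_self hv)))
      have hk₀v := hk₀ v (Ioo_subset_Icc_self hv)
      nlinarith [hle v hv, exp_pos (-G v)]
  have hscaled : y b * exp (-G b) ≤ y a + K b := by
    have := hanti (left_mem_Icc.2 hab) (right_mem_Icc.2 hab) hab
    simp only [G, K, intervalIntegral.integral_same, neg_zero, exp_zero, mul_one, sub_zero]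
      at this
    linarith
  calc y b = y b * exp (-G b) * exp (G b) := by
        rw [mul_assoc, ← exp_add, neg_add_cancel, exp_zero, mul_one]
    _ ≤ (y a + K b) * exp (G b) := by gcongr

theorem uniform_gronwall_window {y y' h : ℝ → ℝ} {c₁ c₂ a b : ℝ} (hab : a < b) (hc₁ : 0 ≤ c₁)
    (hc₂ : 0 ≤ c₂) (hy : ContinuousOn y (Icc a b)) (hy' : ∀ t ∈ Ioo a b, HasDerivAt y (y' t) t)
    (hh : ContinuousOn h (Icc a b)) (hy₀ : ∀ t ∈ Icc a b, 0 ≤ y t)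
    (hh₀ : ∀ t ∈ Icc a b, 0 ≤ h t) (hle : ∀ t ∈ Ioo a b, y' t ≤ c₁ * y t ^ 2 + c₂ + h t) :
    y b ≤ ((∫ t in a..b, y t) / (b - a) + c₂ * (b - a) + ∫ t in a..b, h t) *
      exp (c₁ * ∫ t in a..b, y t) := by
  set Y := ∫ t in a..b, y t
  set C := c₂ * (b - a) + ∫ t in a..b, h t
  set E := exp (c₁ * Y)
  have hfrom : ∀ s ∈ Icc a b, y b ≤ (y s + C) * E := by
    intro s hs
    have hsub : Icc s b ⊆ Icc a b := Icc_subset_Icc_left hs.1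
    have hgr := le_mul_exp_integral_of_deriv_le_mul_add (g := fun t => c₁ * y t)
      (k := fun t => c₂ + h t) hs.2 (hy.mono hsub)
      (fun t ht => hy' t (Ioo_subset_Ioo_left hs.1 ht)) (continuousOn_const.mul (hy.mono hsub))
      (fun t ht => mul_nonneg hc₁ (hy₀ t (hsub ht))) (continuousOn_const.add (hh.mono hsub))
      (fun t ht => add_nonneg hc₂ (hh₀ t (hsub ht)))
      (fun t ht => (hle t (Ioo_subset_Ioo_left hs.1 ht)).trans_eq (by ring))
    have hY := intervalIntegral_le_of_le_left_of_nonneg hs.1 hs.2 hy hy₀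
    have hH := intervalIntegral_le_of_le_left_of_nonneg hs.1 hs.2 hh hh₀
    have hC : 0 ≤ C := add_nonneg (mul_nonneg hc₂ (sub_nonneg.2 hab.le))
      (intervalIntegral.integral_nonneg hab.le hh₀)
    refine hgr.trans (mul_le_mul ?_ ?_ (exp_pos _).le (add_nonneg (hy₀ s hs) hC))
    · rw [intervalIntegral.integral_add intervalIntegrable_const
        ((hh.mono hsub).intervalIntegrable_of_Icc hs.2), intervalIntegral.integral_const,
        smul_eq_mul]
      have := mul_le_mul_of_nonneg_left (sub_le_sub_left hs.1 b) hc₂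
      linarith
    · rw [intervalIntegral.integral_const_mul]
      exact exp_le_exp.2 (mul_le_mul_of_nonneg_left hY hc₁)
  have havg : (b - a) * y b ≤ (Y + C * (b - a)) * E := calc
    (b - a) * y b = ∫ _ in a..b, y b := by rw [intervalIntegral.integral_const, smul_eq_mul]
    _ ≤ ∫ s in a..b, (y s + C) * E :=
        intervalIntegral.integral_mono_on hab.le intervalIntegrable_const
          ((hy.add continuousOn_const).mul continuousOn_const |>.intervalIntegrable_of_Icc hab.le)
          hfrom
    _ = (Y + C * (b - a)) * E := by
        rw [intervalIntegral.integral_mul_const,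
          intervalIntegral.integral_add (hy.intervalIntegrable_of_Icc hab.le)
            intervalIntegrable_const,
          intervalIntegral.integral_const, smul_eq_mul, mul_comm C]
  have hba : 0 < b - a := sub_pos.2 hab
  rw [add_assoc, div_add' _ _ _ hba.ne', div_mul_eq_mul_div, le_div_iff₀ hba]
  linarith

theorem tendsto_atTop_zero_of_deriv_le_sq_add {y y' h : ℝ → ℝ} {c₁ c₂ : ℝ} (hc₁ : 0 ≤ c₁)
    (hc₂ : 0 ≤ c₂) (hy : ContinuousOn y (Ici 0)) (hy' : ∀ t ∈ Ioi 0, HasDerivAt y (y' t) t)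
    (hh : ContinuousOn h (Ici 0)) (hy₀ : ∀ t ∈ Ici 0, 0 ≤ y t) (hh₀ : ∀ t ∈ Ici 0, 0 ≤ h t)
    (hle : ∀ t ∈ Ioi 0, y' t ≤ c₁ * y t ^ 2 + c₂ + h t)
    (hyi : IntegrableOn y (Ioi 0)) (hhi : IntegrableOn h (Ioi 0)) :
    Tendsto y atTop (nhds 0) := by
  refine tendsto_order.2 ⟨fun ε hε => ?_, fun ε hε => ?_⟩
  · filter_upwards [eventually_ge_atTop 0] with t ht using hε.trans_le (hy₀ t ht)
  set r := ε / (c₂ + 1)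
  have hr : 0 < r := by positivity
  have hc₂r : c₂ * r < ε := by
    rw [mul_div_assoc', div_lt_iff₀ (by positivity)]
    nlinarith
  have hY := tendsto_intervalIntegral_sub_atTop hyi r
  have hbound : Tendsto (fun t => ((∫ x in t - r..t, y x) / r + c₂ * r + ∫ x in t - r..t, h x) *
      exp (c₁ * ∫ x in t - r..t, y x)) atTop (nhds (c₂ * r)) := by
    simpa using ((hY.div_const r).add_const (c₂ * r)).add
      (tendsto_intervalIntegral_sub_atTop hhi r) |>.mul (hY.const_mul c₁).rexp
  filter_upwards [eventually_ge_atTop r, hbound.eventually (gt_mem_nhds hc₂r)] with t ht htε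
  refine lt_of_le_of_lt ?_ htε
  have hsub : Icc (t - r) t ⊆ Ici 0 := fun u hu => (sub_nonneg.2 ht).trans hu.1
  have hsub' : Ioo (t - r) t ⊆ Ioi 0 := fun u hu => (sub_nonneg.2 ht).trans_lt hu.1
  simpa only [sub_sub_cancel] using uniform_gronwall_window (sub_lt_self t hr) hc₁ hc₂
    (hy.mono hsub) (fun u hu => hy' u (hsub' hu)) (hh.mono hsub) (fun u hu => hy₀ u (hsub hu))
    (fun u hu => hh₀ u (hsub hu)) (fun u hu => hle u (hsub' hu))

theorem uniform_gronwall_general (T : ℝ≥0∞)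
    (y y' h : ℝ → ℝ) (c₁ c₂ c₃ c₄ : ℝ)
    (hc₁ : 0 ≤ c₁) (hc₂ : 0 ≤ c₂) (hc₃ : 0 ≤ c₃) (hc₄ : 0 ≤ c₄)
    (hycont : ContinuousOn y {t : ℝ | 0 ≤ t ∧ ENNReal.ofReal t ≤ T})
    (hhcont : ContinuousOn h {t : ℝ | 0 ≤ t ∧ ENNReal.ofReal t ≤ T})
    (hynn : ∀ t, 0 ≤ t → ENNReal.ofReal t ≤ T → 0 ≤ y t)
    (hhnn : ∀ t, 0 ≤ t → ENNReal.ofReal t ≤ T → 0 ≤ h t)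
    (hderiv : ∀ t, 0 ≤ t → ENNReal.ofReal t ≤ T → HasDerivAt y (y' t) t)
    (hineq : ∀ t, 0 ≤ t → ENNReal.ofReal t ≤ T → y' t ≤ c₁ * y t ^ 2 + c₂ + h t)
    (hyint : ∫⁻ t in {t : ℝ | 0 ≤ t ∧ ENNReal.ofReal t ≤ T}, ENNReal.ofReal (y t)
        ≤ ENNReal.ofReal c₃)
    (hhint : ∫⁻ t in {t : ℝ | 0 ≤ t ∧ ENNReal.ofReal t ≤ T}, ENNReal.ofReal (h t)
        ≤ ENNReal.ofReal c₄) :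
    (∀ r : ℝ, 0 < r → ENNReal.ofReal r < T →
      ∀ t : ℝ, 0 ≤ t → ENNReal.ofReal (t + r) ≤ T →
        y (t + r) ≤ (c₃ / r + c₂ * r + c₄) * Real.exp (c₁ * c₃))
    ∧ (T = ⊤ → Tendsto y atTop (nhds 0)) := by
  set S := {t : ℝ | 0 ≤ t ∧ ENNReal.ofReal t ≤ T}
  have hy₀ : ∀ t ∈ S, 0 ≤ y t := fun t ht => hynn t ht.1 ht.2
  have hh₀ : ∀ t ∈ S, 0 ≤ h t := fun t ht => hhnn t ht.1 ht.2
  have hy' : ∀ t ∈ S, HasDerivAt y (y' t) t := fun t ht => hderiv t ht.1 ht.2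
  have hle : ∀ t ∈ S, y' t ≤ c₁ * y t ^ 2 + c₂ + h t := fun t ht => hineq t ht.1 ht.2
  refine ⟨fun r hr _ t ht htr => ?_, fun hT => ?_⟩
  · have hS : Icc t (t + r) ⊆ S := fun u hu =>
      ⟨ht.trans hu.1, (ENNReal.ofReal_le_ofReal hu.2).trans htr⟩
    have hS' : Ioc t (t + r) ⊆ S := Ioc_subset_Icc_self.trans hS
    have hY := intervalIntegral_le_of_lintegral_ofReal_le (le_add_of_nonneg_right hr.le) hS'
      ((hycont.mono hS).integrableOn_Icc.mono_set Ioc_subset_Icc_self)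
      (fun u hu => hy₀ u (hS' hu)) hc₃ hyint
    have hH := intervalIntegral_le_of_lintegral_ofReal_le (le_add_of_nonneg_right hr.le) hS'
      ((hhcont.mono hS).integrableOn_Icc.mono_set Ioc_subset_Icc_self)
      (fun u hu => hh₀ u (hS' hu)) hc₄ hhint
    have hwin := uniform_gronwall_window (lt_add_of_pos_right t hr) hc₁ hc₂ (hycont.mono hS)
      (fun u hu => hy' u (hS (Ioo_subset_Icc_self hu))) (hhcont.mono hS)
      (fun u hu => hy₀ u (hS hu)) (fun u hu => hh₀ u (hS hu))
      (fun u hu => hle u (hS (Ioo_subset_Icc_self hu)))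
    rw [add_sub_cancel_left] at hwin
    exact hwin.trans (by gcongr)
  · have hS : S = Ici 0 := by ext; simp [S, hT]
    rw [hS] at hycont hhcont hyint hhint hy₀ hh₀ hy' hle
    exact tendsto_atTop_zero_of_deriv_le_sq_add hc₁ hc₂ hycont
      (fun t ht => hy' t (Ioi_subset_Ici_self ht)) hhcont hy₀ hh₀
      (fun t ht => hle t (Ioi_subset_Ici_self ht))
      ((integrableOn_of_lintegral_ofReal_le measurableSet_Ici hycont hy₀ hyint).mono_set
        Ioi_subset_Ici_self)
      ((integrableOn_of_lintegral_ofReal_le measurableSet_Ici hhcont hh₀ hhint).mono_set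
        Ioi_subset_Ici_self)

/-- Uniform Gronwall-type lemma: if y' ≤ c₁y² + c₂ + h on [0,T] with
∫₀ᵀ y ≤ c₃ and ∫₀ᵀ h ≤ c₄, then y(t+r) ≤ (c₃/r + c₂r + c₄)e^{c₁c₃} for
r ∈ (0,T), t ∈ [0,T-r]; and if T = ∞ then y(t) → 0 as t → ∞. -/
theorem uniform_gronwall (T : ℝ≥0∞) (hT : 0 < T)
    (y y' h : ℝ → ℝ) (c₁ c₂ c₃ c₄ : ℝ)
    (hc₁ : 0 ≤ c₁) (hc₂ : 0 ≤ c₂) (hc₃ : 0 ≤ c₃) (hc₄ : 0 ≤ c₄)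
    (hycont : ContinuousOn y {t : ℝ | 0 ≤ t ∧ ENNReal.ofReal t ≤ T})
    (hhcont : ContinuousOn h {t : ℝ | 0 ≤ t ∧ ENNReal.ofReal t ≤ T})
    (hynn : ∀ t, 0 ≤ t → ENNReal.ofReal t ≤ T → 0 ≤ y t)
    (hhnn : ∀ t, 0 ≤ t → ENNReal.ofReal t ≤ T → 0 ≤ h t)
    (hderiv : ∀ t, 0 ≤ t → ENNReal.ofReal t ≤ T → HasDerivAt y (y' t) t)
    (hineq : ∀ t, 0 ≤ t → ENNReal.ofReal t ≤ T → y' t ≤ c₁ * y t ^ 2 + c₂ + h t)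
    (hyint : ∫⁻ t in {t : ℝ | 0 ≤ t ∧ ENNReal.ofReal t ≤ T}, ENNReal.ofReal (y t)
        ≤ ENNReal.ofReal c₃)
    (hhint : ∫⁻ t in {t : ℝ | 0 ≤ t ∧ ENNReal.ofReal t ≤ T}, ENNReal.ofReal (h t)
        ≤ ENNReal.ofReal c₄) :
    (∀ r : ℝ, 0 < r → ENNReal.ofReal r < T →
      ∀ t : ℝ, 0 ≤ t → ENNReal.ofReal (t + r) ≤ T →
        y (t + r) ≤ (c₃ / r + c₂ * r + c₄) * Real.exp (c₁ * c₃))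
    ∧ (T = ⊤ → Tendsto y atTop (nhds 0)) :=
  uniform_gronwall_general T y y' h c₁ c₂ c₃ c₄ hc₁ hc₂ hc₃ hc₄ hycont hhcont hynn hhnn hderiv hineq
    hyint hhint
end

section
/- Let θ, θ_∞ : ℝ² → ℝ be differentiable. Then pointwise 2|∇(d - d_∞)|² - |∇(θ - θ_∞)|² ≥ (1 - |2cos(θ - θ_∞) - 1|)·(|∇θ|² + |∇θ_∞|²) ≥ 0 provided cos(θ - θ_∞) ≥ 0, where d = (sin θ, cos θ)ᵀ and d_∞ = (sin θ_∞, cos θ_∞)ᵀ. -/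
open Real

noncomputable section

/-- Partial derivative in the first coordinate direction. -/
def pd1 (f : ℝ × ℝ → ℝ) (x : ℝ × ℝ) : ℝ := fderiv ℝ f x (1, 0)

/-- Partial derivative in the second coordinate direction. -/
def pd2 (f : ℝ × ℝ → ℝ) (x : ℝ × ℝ) : ℝ := fderiv ℝ f x (0, 1)

/-- The Laplacian on ℝ². -/
def lap (f : ℝ × ℝ → ℝ) (x : ℝ × ℝ) : ℝ := pd1 (pd1 f) x + pd2 (pd2 f) x

/-! Writing `a = ∂θ`, `b = ∂θ_∞` for a directional derivative and `c = cos (θ - θ_∞)`, the chain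
rule and `sin² + cos² = 1` give `2|∂(d - d_∞)|² - |∂(θ - θ_∞)|² = a² + b² - 2(2c - 1)ab` in every
direction, and `2kab ≤ |k|(a² + b²)` bounds the cross term. The lower bound is nonnegative
because `0 ≤ c ≤ 1` forces `|2c - 1| ≤ 1`. -/

theorem two_mul_mul_mul_le_abs_mul_sq_add_sq (k a b : ℝ) :
    2 * k * a * b ≤ |k| * (a ^ 2 + b ^ 2) :=
  calc 2 * k * a * b ≤ |2 * k * a * b| := le_abs_self _
    _ = |k| * (2 * |a| * |b|) := by simp only [abs_mul, abs_two]; ring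
    _ ≤ |k| * (a ^ 2 + b ^ 2) := by
      gcongr
      nlinarith [sq_nonneg (|a| - |b|), sq_abs a, sq_abs b]

theorem sq_cos_mul_sub_add_sq_sin_mul_sub (s t a b : ℝ) :
    2 * ((cos s * a - cos t * b) ^ 2 + (-sin s * a + sin t * b) ^ 2) - (a - b) ^ 2
      = a ^ 2 + b ^ 2 - 2 * (2 * cos (s - t) - 1) * a * b := by
  rw [cos_sub]
  linear_combination (2 * a ^ 2) * sin_sq_add_cos_sq s + (2 * b ^ 2) * sin_sq_add_cos_sq t

section Director

variable {E : Type*} [NormedAddCommGroup E] [NormedSpace ℝ E] {f g : E → ℝ} {x : E}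

theorem fderiv_sin_sub_sin_apply (hf : DifferentiableAt ℝ f x) (hg : DifferentiableAt ℝ g x)
    (v : E) :
    fderiv ℝ (fun y => sin (f y) - sin (g y)) x v
      = cos (f x) * fderiv ℝ f x v - cos (g x) * fderiv ℝ g x v := by
  rw [fderiv_fun_sub hf.sin hg.sin, fderiv_sin hf, fderiv_sin hg]
  rfl

theorem fderiv_cos_sub_cos_apply (hf : DifferentiableAt ℝ f x) (hg : DifferentiableAt ℝ g x)
    (v : E) :
    fderiv ℝ (fun y => cos (f y) - cos (g y)) x v
      = -sin (f x) * fderiv ℝ f x v + sin (g x) * fderiv ℝ g x v := by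
  rw [fderiv_fun_sub hf.cos hg.cos, fderiv_cos hf, fderiv_cos hg]
  simp only [sub_apply, smul_apply, smul_eq_mul]
  ring

theorem director_diff_fderiv_sq_identity (hf : DifferentiableAt ℝ f x)
    (hg : DifferentiableAt ℝ g x) (v : E) :
    2 * (fderiv ℝ (fun y => sin (f y) - sin (g y)) x v ^ 2
        + fderiv ℝ (fun y => cos (f y) - cos (g y)) x v ^ 2)
      - fderiv ℝ (fun y => f y - g y) x v ^ 2
      = fderiv ℝ f x v ^ 2 + fderiv ℝ g x v ^ 2
        - 2 * (2 * cos (f x - g x) - 1) * fderiv ℝ f x v * fderiv ℝ g x v := by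
  rw [fderiv_sin_sub_sin_apply hf hg, fderiv_cos_sub_cos_apply hf hg, fderiv_fun_sub hf hg]
  exact sq_cos_mul_sub_add_sq_sin_mul_sub _ _ _ _

end Director

/-- With d = (sin θ, cos θ) and d_∞ = (sin θ_∞, cos θ_∞), pointwise
2|∇(d - d_∞)|² - |∇(θ - θ_∞)|² ≥ (1 - |2cos(θ - θ_∞) - 1|)(|∇θ|² + |∇θ_∞|²) ≥ 0
provided cos(θ - θ_∞) ≥ 0. -/
theorem grad_angle_director_comparison (θ θi : ℝ × ℝ → ℝ)
    (hθ : Differentiable ℝ θ) (hθi : Differentiable ℝ θi) (x : ℝ × ℝ)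
    (hcos : 0 ≤ Real.cos (θ x - θi x)) :
    ((1 - |2 * Real.cos (θ x - θi x) - 1|)
        * ((pd1 θ x ^ 2 + pd2 θ x ^ 2) + (pd1 θi x ^ 2 + pd2 θi x ^ 2))
      ≤ 2 * (pd1 (fun y => Real.sin (θ y) - Real.sin (θi y)) x ^ 2
            + pd1 (fun y => Real.cos (θ y) - Real.cos (θi y)) x ^ 2
            + pd2 (fun y => Real.sin (θ y) - Real.sin (θi y)) x ^ 2
            + pd2 (fun y => Real.cos (θ y) - Real.cos (θi y)) x ^ 2)
        - (pd1 (fun y => θ y - θi y) x ^ 2 + pd2 (fun y => θ y - θi y) x ^ 2))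
    ∧ 0 ≤ (1 - |2 * Real.cos (θ x - θi x) - 1|)
        * ((pd1 θ x ^ 2 + pd2 θ x ^ 2) + (pd1 θi x ^ 2 + pd2 θi x ^ 2)) := by
  set k := 2 * cos (θ x - θi x) - 1
  have h₁ := director_diff_fderiv_sq_identity (hθ x) (hθi x) (1, 0)
  have h₂ := director_diff_fderiv_sq_identity (hθ x) (hθi x) (0, 1)
  have b₁ := two_mul_mul_mul_le_abs_mul_sq_add_sq k (pd1 θ x) (pd1 θi x)
  have b₂ := two_mul_mul_mul_le_abs_mul_sq_add_sq k (pd2 θ x) (pd2 θi x)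
  have hk : |k| ≤ 1 := abs_le.2 ⟨by linarith, by linarith [cos_le_one (θ x - θi x)]⟩
  simp only [pd1, pd2] at *
  constructor
  · linarith
  · have : 0 ≤ 1 - |k| := by linarith
    positivity
end
end
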